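/- For n ≥ 2, the element ζ_n = Σ_{i=1}^n y_1 ∧ … ∧ ŷ_i ∧ … ∧ y_n ∧ y_{n+1} ∧ … ∧ ŷ_{n+i} ∧ … ∧ y_{2n} ∈ ∧^{2n-2}(I_n) (where hats denote omitted factors) is h̄_n-invariant. -/

import Mathlib

open ExteriorAlgebra

noncomputable section

/-! ### The derivation extension of an endomorphism to the exterior algebra -/

variable {M : Type*} [AddCommGroup M] [Module ℝ M]

/-- Auxiliary linear map used to build the derivation extension of `f` on the
exterior algebra: `m ↦ [[ι m, ι (f m)], [0, ι m]]`. -/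
def derivAux (f : M →ₗ[ℝ] M) :
    M →ₗ[ℝ] Matrix (Fin 2) (Fin 2) (ExteriorAlgebra ℝ M) where
  toFun m := !![ι ℝ m, ι ℝ (f m); 0, ι ℝ m]
  map_add' x y := by
    ext i j
    fin_cases i <;> fin_cases j <;> simp
  map_smul' r x := by
    ext i j
    fin_cases i <;> fin_cases j <;> simp

theorem derivAux_sq (f : M →ₗ[ℝ] M) (m : M) : derivAux f m * derivAux f m = 0 := by
  ext i j
  fin_cases i <;> fin_cases j <;>
    simp [derivAux, Matrix.mul_apply, Fin.sum_univ_two, ι_sq_zero, ι_add_mul_swap]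

/-- The degree-zero derivation of the exterior algebra `⋀ M` extending the endomorphism
`f` of the module `M` of generators; on a pure wedge it acts by
`v₁ ∧ ⋯ ∧ vₖ ↦ ∑ᵢ v₁ ∧ ⋯ ∧ f vᵢ ∧ ⋯ ∧ vₖ` (the action of `f ∈ 𝔤` on `⋀ M` induced by a
representation of a Lie algebra `𝔤` on `M`). -/
def derivExt (f : M →ₗ[ℝ] M) :
    ExteriorAlgebra ℝ M →ₗ[ℝ] ExteriorAlgebra ℝ M where
  toFun x := ExteriorAlgebra.lift ℝ ⟨derivAux f, derivAux_sq f⟩ x 0 1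
  map_add' x y := by simp [Matrix.add_apply]
  map_smul' r x := by simp [Matrix.smul_apply]

/-- The wedge product of a list of vectors of `M`, as an element of the exterior
algebra of `M`. -/
def wedgeL (l : List M) : ExteriorAlgebra ℝ M := (l.map (ι ℝ)).prod

/-! ### The representation `I_n` of `h̄_n = so(n) ⊕ sl(2,ℝ)`

We realize `I_n = I_n¹ ⊕ I_n² = ℝⁿ ⊕ ℝⁿ` as `Fin n → ℝ × ℝ`, with
`y i = Pi.single i (1,0)` (the vector field `xᵢ ∂/∂x^{n+1}`, a Galilean boost) and
`y' i = Pi.single i (0,1)` (the vector field `xᵢ ∂/∂x^{n+2}`, a space translation);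
`h̄_n` is realized, via its faithful standard representation, as the span inside
`End(I_n)` of the generators `XEnd i j` (rotations, spanning `so(n)`) and
`aEnd`, `bEnd`, `cEnd` (spanning `sl(2,ℝ)`). -/

/-- The module `I_n = ℝⁿ ⊕ ℝⁿ`. -/
abbrev In (n : ℕ) := Fin n → ℝ × ℝ

/-- `y i = xᵢ ∂/∂x^{n+1}`, the basis of the first copy `I_n¹`. -/
def yb {n : ℕ} (i : Fin n) : In n := Pi.single i (1, 0)

/-- `y (n+i) = xᵢ ∂/∂x^{n+2}`, the basis of the second copy `I_n²`. -/
def yb' {n : ℕ} (i : Fin n) : In n := Pi.single i (0, 1)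

/-- The rotation generator `X_{ij} ∈ so(n)` acting on `Fin n → W`:
`eᵢ w ↦ eⱼ w`, `eⱼ w ↦ - eᵢ w`. -/
def rotEnd {n : ℕ} {W : Type*} [AddCommGroup W] [Module ℝ W] (i j : Fin n) :
    (Fin n → W) →ₗ[ℝ] (Fin n → W) where
  toFun v := Pi.single j (v i) - Pi.single i (v j)
  map_add' x y := by
    simp only [Pi.add_apply, Pi.single_add]
    abel
  map_smul' r x := by
    simp only [Pi.smul_apply, Pi.single_smul, RingHom.id_apply, smul_sub]

/-- The action of the rotation generator `X_{ij} ∈ so(n) ⊆ h̄_n` on `I_n`: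
`y i ↦ y j`, `y j ↦ - y i`, and similarly on the second copy `I_n²`. -/
def XEnd {n : ℕ} (i j : Fin n) : In n →ₗ[ℝ] In n := rotEnd i j

/-- The action of `a_n ∈ sl(2,ℝ) ⊆ h̄_n` on `I_n`: `y i ↦ y i`, `y (n+i) ↦ - y (n+i)`. -/
def aEnd (n : ℕ) : In n →ₗ[ℝ] In n where
  toFun v := fun k => ((v k).1, -(v k).2)
  map_add' x y := by funext k; simp [Prod.ext_iff]; try ring
  map_smul' r x := by funext k; simp [Prod.ext_iff]; try ring

/-- The action of `b_n ∈ sl(2,ℝ) ⊆ h̄_n` on `I_n`: `y i ↦ - y (n+i)`, `y (n+i) ↦ 0`. -/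
def bEnd (n : ℕ) : In n →ₗ[ℝ] In n where
  toFun v := fun k => (0, -(v k).1)
  map_add' x y := by funext k; simp [Prod.ext_iff]; try ring
  map_smul' r x := by funext k; simp [Prod.ext_iff]; try ring

/-- The action of `c_n ∈ sl(2,ℝ) ⊆ h̄_n` on `I_n`: `y i ↦ 0`, `y (n+i) ↦ y i`. -/
def cEnd (n : ℕ) : In n →ₗ[ℝ] In n where
  toFun v := fun k => ((v k).2, 0)
  map_add' x y := by funext k; simp [Prod.ext_iff]; try ring
  map_smul' r x := by funext k; simp [Prod.ext_iff]; try ring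

/-- The generating set of (the image in `End(I_n)` of) `h̄_n = so(n) ⊕ sl(2,ℝ)`. -/
def hbarGens (n : ℕ) : Set (In n →ₗ[ℝ] In n) :=
  {aEnd n, bEnd n, cEnd n} ∪ {f | ∃ i j : Fin n, i < j ∧ f = XEnd i j}

/-- `h̄_n = so(n) ⊕ sl(2,ℝ)`, realized (via its faithful standard representation)
as the span of its generators inside `End(I_n)`. -/
def hbar (n : ℕ) : Submodule ℝ (In n →ₗ[ℝ] In n) := Submodule.span ℝ (hbarGens n)

/-- `ζ_n = ∑ᵢ y₁ ∧ ⋯ ∧ ŷᵢ ∧ ⋯ ∧ yₙ ∧ y_{n+1} ∧ ⋯ ∧ ŷ_{n+i} ∧ ⋯ ∧ y_{2n} ∈ ⋀^{2n-2}(I_n)`,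
where hats denote omitted factors. -/
def zetaEl (n : ℕ) : ExteriorAlgebra ℝ (In n) :=
  ∑ i : Fin n,
    wedgeL (((List.finRange n).filter (· ≠ i)).map yb ++
            ((List.finRange n).filter (· ≠ i)).map yb')

/-!
`derivExt f` is a derivation, so on `ι v₁ * ⋯ * ι vₖ` it acts by applying `f` to one factor at
a time. For `n = m + 1` write `Y k` and `Y' k` for the wedges of the `y`s and of the `y'`s with
the `k`-th factor omitted, so that `ζ = ∑ₖ Y k * Y' k`. The generator `a` scales `Y k` by `m` and
`Y' k` by `-m`. The generator `b` kills `Y' k` and turns a factor `y l` of `Y k` into `-y' l`,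
which already occurs in `Y' k`; symmetrically for `c`. For the rotation `X i j` only the terms
`k = i, j` survive, with `X (Y i) = -ε • Y j` and `X (Y j) = ε • Y i` for one sign `ε`, the sign
of the permutation of `Fin m` reordering `swap i j ∘ succAbove i` into `succAbove j`; the same
holds for `Y'`, and the four resulting terms cancel in pairs.
-/

section Derivation

theorem lift_derivAux_apply (f : M →ₗ[ℝ] M) (x : ExteriorAlgebra ℝ M) :
    ExteriorAlgebra.lift ℝ ⟨derivAux f, derivAux_sq f⟩ x = !![x, derivExt f x; 0, x] := by
  have diag : ExteriorAlgebra.lift ℝ ⟨derivAux f, derivAux_sq f⟩ x 0 0 = x ∧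
      ExteriorAlgebra.lift ℝ ⟨derivAux f, derivAux_sq f⟩ x 1 0 = 0 ∧
      ExteriorAlgebra.lift ℝ ⟨derivAux f, derivAux_sq f⟩ x 1 1 = x := by
    induction x using ExteriorAlgebra.induction with
    | algebraMap r => simp [Matrix.algebraMap_matrix_apply]
    | ι m => simp [derivAux]
    | mul x y hx hy => simp [Matrix.mul_apply, Fin.sum_univ_two, hx, hy]
    | add x y hx hy => simp [hx, hy]
  ext i j
  fin_cases i <;> fin_cases j
  exacts [diag.1, rfl, diag.2.1, diag.2.2]

theorem derivExt_mul (f : M →ₗ[ℝ] M) (x y : ExteriorAlgebra ℝ M) :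
    derivExt f (x * y) = derivExt f x * y + x * derivExt f y := by
  change ExteriorAlgebra.lift ℝ ⟨derivAux f, derivAux_sq f⟩ (x * y) 0 1 = _
  rw [map_mul, lift_derivAux_apply, lift_derivAux_apply]
  simp [Matrix.mul_apply, add_comm]

theorem derivExt_ι (f : M →ₗ[ℝ] M) (m : M) : derivExt f (ι ℝ m) = ι ℝ (f m) := by
  simp [derivExt, derivAux]

theorem derivExt_algebraMap (f : M →ₗ[ℝ] M) (r : ℝ) :
    derivExt f (algebraMap ℝ (ExteriorAlgebra ℝ M) r) = 0 := by
  simp [derivExt, Matrix.algebraMap_matrix_apply]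

theorem derivExt_one (f : M →ₗ[ℝ] M) : derivExt f 1 = 0 := by
  simpa using derivExt_algebraMap f 1

theorem derivExt_add (f g : M →ₗ[ℝ] M) : derivExt (f + g) = derivExt f + derivExt g := by
  refine LinearMap.ext fun x => ?_
  induction x using ExteriorAlgebra.induction with
  | algebraMap r => simp [derivExt_algebraMap]
  | ι m => simp [derivExt_ι]
  | mul x y hx hy =>
    simp only [LinearMap.add_apply] at hx hy ⊢
    rw [derivExt_mul, derivExt_mul, derivExt_mul, hx, hy]
    noncomm_ring
  | add x y hx hy => simp only [map_add, hx, hy, LinearMap.add_apply]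

theorem derivExt_smul (r : ℝ) (f : M →ₗ[ℝ] M) : derivExt (r • f) = r • derivExt f := by
  refine LinearMap.ext fun x => ?_
  induction x using ExteriorAlgebra.induction with
  | algebraMap r => simp [derivExt_algebraMap]
  | ι m => simp [derivExt_ι]
  | mul x y hx hy =>
    simp only [LinearMap.smul_apply] at hx hy ⊢
    rw [derivExt_mul, derivExt_mul, hx, hy, smul_add, smul_mul_assoc, mul_smul_comm]
  | add x y hx hy => simp only [map_add, hx, hy, LinearMap.smul_apply]

variable (M) in
def derivExtₗ : (M →ₗ[ℝ] M) →ₗ[ℝ] ExteriorAlgebra ℝ M →ₗ[ℝ] ExteriorAlgebra ℝ M where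
  toFun := derivExt
  map_add' := derivExt_add
  map_smul' := derivExt_smul

theorem derivExt_neg (f : M →ₗ[ℝ] M) : derivExt (-f) = -derivExt f :=
  (derivExtₗ M).map_neg f

theorem derivExt_ιMulti (f : M →ₗ[ℝ] M) {k : ℕ} (v : Fin k → M) :
    derivExt f (ιMulti ℝ k v) = ∑ t, ιMulti ℝ k (Function.update v t (f (v t))) := by
  induction k with
  | zero => simp [derivExt_one]
  | succ k ih =>
    have vecTail_eq_tail (w : Fin (k + 1) → M) : Matrix.vecTail w = Fin.tail w := rfl
    rw [ιMulti_succ_apply, derivExt_mul, derivExt_ι, ih, Fin.sum_univ_succ, Finset.mul_sum]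
    simp only [ιMulti_succ_apply, Function.update_self, vecTail_eq_tail, Fin.tail_update_zero,
      Fin.tail_update_succ]
    rfl

end Derivation

section Wedge

open Function

variable {f : M →ₗ[ℝ] M} {k : ℕ}

theorem ιMulti_update_eq_zero_of_eq {v : Fin k → M} {s t : Fin k} (hst : s ≠ t)
    {x : M} (hx : x = v s) : ιMulti ℝ k (update v t x) = 0 :=
  (ιMulti ℝ k).map_eq_zero_of_eq _ (by simp [update_of_ne hst, hx]) hst.symm

theorem ιMulti_mul_ιMulti_eq_zero_of_eq {a b : ℕ} {u : Fin a → M} {w : Fin b → M}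
    {s : Fin a} {t : Fin b} (h : u s = w t) : ιMulti ℝ a u * ιMulti ℝ b w = 0 := by
  rw [ιMulti_mul_ιMulti]
  refine (ιMulti ℝ (a + b)).map_eq_zero_of_eq _ (i := Fin.castAdd b s) (j := Fin.natAdd a t)
    (by simpa using h) (Fin.ext_iff.not.2 ?_)
  simp only [Fin.val_castAdd, Fin.val_natAdd]
  omega

theorem derivExt_ιMulti_of_apply_eq_smul {v : Fin k → M} {c : ℝ}
    (hv : ∀ t, f (v t) = c • v t) : derivExt f (ιMulti ℝ k v) = ((k : ℝ) * c) • ιMulti ℝ k v := by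
  simp only [derivExt_ιMulti, hv, AlternatingMap.map_update_smul, update_eq_self,
    Finset.sum_const, Finset.card_univ, Fintype.card_fin]
  rw [← Nat.cast_smul_eq_nsmul ℝ, smul_smul]

theorem derivExt_ιMulti_eq_zero {v : Fin k → M} (hv : ∀ t, f (v t) = 0) :
    derivExt f (ιMulti ℝ k v) = 0 := by
  simp [derivExt_ιMulti, hv]

theorem derivExt_ιMulti_mul_ιMulti_eq_zero_of_smul_of_neg_smul {u w : Fin k → M} {c : ℝ}
    (hu : ∀ t, f (u t) = c • u t) (hw : ∀ t, f (w t) = -c • w t) :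
    derivExt f (ιMulti ℝ k u * ιMulti ℝ k w) = 0 := by
  rw [derivExt_mul, derivExt_ιMulti_of_apply_eq_smul hu, derivExt_ιMulti_of_apply_eq_smul hw,
    smul_mul_assoc, mul_smul_comm, ← add_smul]
  simp

theorem derivExt_ιMulti_mul_ιMulti_eq_zero_of_left_to_right {u w : Fin k → M} {c : ℝ}
    (hu : ∀ t, f (u t) = c • w t) (hw : ∀ t, f (w t) = 0) :
    derivExt f (ιMulti ℝ k u * ιMulti ℝ k w) = 0 := by
  rw [derivExt_mul, derivExt_ιMulti_eq_zero hw, mul_zero, add_zero, derivExt_ιMulti, Finset.sum_mul]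
  refine Finset.sum_eq_zero fun t _ => ?_
  rw [hu, AlternatingMap.map_update_smul, smul_mul_assoc,
    ιMulti_mul_ιMulti_eq_zero_of_eq (update_self t (w t) u), smul_zero]

theorem derivExt_ιMulti_mul_ιMulti_eq_zero_of_right_to_left {u w : Fin k → M} {c : ℝ}
    (hu : ∀ t, f (u t) = 0) (hw : ∀ t, f (w t) = c • u t) :
    derivExt f (ιMulti ℝ k u * ιMulti ℝ k w) = 0 := by
  rw [derivExt_mul, derivExt_ιMulti_eq_zero hu, zero_mul, zero_add, derivExt_ιMulti, Finset.mul_sum]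
  refine Finset.sum_eq_zero fun t _ => ?_
  rw [hw, AlternatingMap.map_update_smul, mul_smul_comm,
    ιMulti_mul_ιMulti_eq_zero_of_eq (update_self t (u t) w).symm, smul_zero]

end Wedge

section Rotation

open Function Equiv

structure ActsAsRotation {n : ℕ} (f : M →ₗ[ℝ] M) (v : Fin n → M) (i j : Fin n) : Prop where
  apply_of_ne : ∀ l, l ≠ i → l ≠ j → f (v l) = 0
  apply_left : f (v i) = v j
  apply_right : f (v j) = -v i

theorem ActsAsRotation.neg_symm {n : ℕ} {f : M →ₗ[ℝ] M} {v : Fin n → M} {i j : Fin n}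
    (h : ActsAsRotation f v i j) : ActsAsRotation (-f) v j i where
  apply_of_ne l hj hi := by simp [h.apply_of_ne l hi hj]
  apply_left := by simp [h.apply_right]
  apply_right := by simp [h.apply_left]

variable {m : ℕ}

theorem exists_perm_swap_comp_succAbove (i j : Fin (m + 1)) :
    ∃ σ : Perm (Fin m), swap i j ∘ i.succAbove = j.succAbove ∘ σ := by
  have hne (t : Fin m) : swap i j (i.succAbove t) ≠ j := fun h =>
    i.succAbove_ne t (by simpa using swap_apply_eq_iff.1 h)
  choose g hg using fun t => Fin.exists_succAbove_eq (hne t)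
  have g_inj : Injective g := fun t t' htt' =>
    Fin.succAbove_right_injective ((swap i j).injective (by rw [← hg, ← hg, htt']))
  exact ⟨Equiv.ofBijective g (Finite.injective_iff_bijective.1 g_inj),
    funext fun t => (hg t).symm⟩

theorem exists_sign_ιMulti_comp_swap_comp_succAbove (i j : Fin (m + 1)) :
    ∃ ε : ℤˣ, ∀ v : Fin (m + 1) → M,
      ιMulti ℝ m (v ∘ swap i j ∘ i.succAbove) = ε • ιMulti ℝ m (v ∘ j.succAbove) ∧
      ιMulti ℝ m (v ∘ swap i j ∘ j.succAbove) = ε • ιMulti ℝ m (v ∘ i.succAbove) := by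
  obtain ⟨σ, hσ⟩ := exists_perm_swap_comp_succAbove i j
  have left (v : Fin (m + 1) → M) :
      ιMulti ℝ m (v ∘ swap i j ∘ i.succAbove) = σ.sign • ιMulti ℝ m (v ∘ j.succAbove) := by
    rw [hσ, ← comp_assoc, AlternatingMap.map_perm]
  refine ⟨σ.sign, fun v => ⟨left v, ?_⟩⟩
  have h := left (v ∘ swap i j)
  rw [show (v ∘ swap i j) ∘ swap i j ∘ i.succAbove = v ∘ i.succAbove by ext; simp] at h
  rw [h, smul_smul, Int.units_mul_self, one_smul]
  rfl

variable {i j : Fin (m + 1)} {f : M →ₗ[ℝ] M} {v : Fin (m + 1) → M}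

theorem ActsAsRotation.derivExt_ιMulti_comp_succAbove_of_ne (h : ActsAsRotation f v i j)
    (hij : i ≠ j) {k : Fin (m + 1)} (hki : k ≠ i) (hkj : k ≠ j) :
    derivExt f (ιMulti ℝ m (v ∘ k.succAbove)) = 0 := by
  rw [derivExt_ιMulti]
  refine Finset.sum_eq_zero fun t _ => ?_
  obtain ⟨si, hsi⟩ := Fin.exists_succAbove_eq hki.symm
  obtain ⟨sj, hsj⟩ := Fin.exists_succAbove_eq hkj.symm
  by_cases hti : k.succAbove t = i
  · refine ιMulti_update_eq_zero_of_eq (s := sj) (fun hst => hij ?_)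
      (by simp [hti, hsj, h.apply_left])
    rw [← hti, ← hst, hsj]
  by_cases htj : k.succAbove t = j
  · rw [comp_apply, htj, h.apply_right, AlternatingMap.map_update_neg, neg_eq_zero]
    refine ιMulti_update_eq_zero_of_eq (s := si) (fun hst => hij ?_) (by simp [hsi])
    rw [← htj, ← hst, hsi]
  · simp [h.apply_of_ne _ hti htj]

theorem ActsAsRotation.derivExt_ιMulti_comp_succAbove_left (h : ActsAsRotation f v i j)
    (hij : i ≠ j) :
    derivExt f (ιMulti ℝ m (v ∘ i.succAbove)) = -ιMulti ℝ m (v ∘ swap i j ∘ i.succAbove) := by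
  obtain ⟨t₀, ht₀⟩ := Fin.exists_succAbove_eq hij.symm
  have hne {t : Fin m} (ht : t ≠ t₀) : i.succAbove t ≠ j := fun h' =>
    ht (Fin.succAbove_right_injective (h'.trans ht₀.symm))
  rw [derivExt_ιMulti, Finset.sum_eq_single t₀ (fun t _ ht => ?_) (by simp)]
  · rw [comp_apply, ht₀, h.apply_right, AlternatingMap.map_update_neg]
    congr 2
    ext t
    rcases eq_or_ne t t₀ with rfl | ht
    · simp [ht₀]
    · simp [update_of_ne ht, swap_apply_of_ne_of_ne (i.succAbove_ne t) (hne ht)]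
  · rw [comp_apply, h.apply_of_ne _ (i.succAbove_ne t) (hne ht),
      AlternatingMap.map_update_zero]

theorem ActsAsRotation.derivExt_ιMulti_comp_succAbove_right (h : ActsAsRotation f v i j)
    (hij : i ≠ j) :
    derivExt f (ιMulti ℝ m (v ∘ j.succAbove)) = ιMulti ℝ m (v ∘ swap i j ∘ j.succAbove) := by
  have h' := h.neg_symm.derivExt_ιMulti_comp_succAbove_left hij.symm
  rwa [derivExt_neg, LinearMap.neg_apply, neg_inj, swap_comm] at h'

theorem ActsAsRotation.derivExt_sum_ιMulti_mul_ιMulti_eq_zero {u w : Fin (m + 1) → M}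
    (hu : ActsAsRotation f u i j) (hw : ActsAsRotation f w i j) (hij : i ≠ j) :
    derivExt f (∑ k : Fin (m + 1),
      ιMulti ℝ m (u ∘ k.succAbove) * ιMulti ℝ m (w ∘ k.succAbove)) = 0 := by
  rw [map_sum, Fintype.sum_eq_add i j hij fun k hk => by
    rw [derivExt_mul, hu.derivExt_ιMulti_comp_succAbove_of_ne hij hk.1 hk.2,
      hw.derivExt_ιMulti_comp_succAbove_of_ne hij hk.1 hk.2, zero_mul, mul_zero, add_zero]]
  obtain ⟨ε, hε⟩ := exists_sign_ιMulti_comp_swap_comp_succAbove (M := M) i j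
  rw [derivExt_mul, derivExt_mul, hu.derivExt_ιMulti_comp_succAbove_left hij,
    hu.derivExt_ιMulti_comp_succAbove_right hij, hw.derivExt_ιMulti_comp_succAbove_left hij,
    hw.derivExt_ιMulti_comp_succAbove_right hij, (hε u).1, (hε u).2, (hε w).1, (hε w).2]
  simp only [neg_mul, mul_neg, smul_mul_assoc, mul_smul_comm]
  abel

end Rotation

theorem List.filter_ne_finRange : ∀ {m : ℕ} (i : Fin (m + 1)),
    (List.finRange (m + 1)).filter (· ≠ i) = (List.finRange m).map i.succAbove
  | 0, i => by simp [Fin.fin_one_eq_zero i]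
  | m + 1, i => by
    cases i using Fin.cases with
    | zero => simp [List.finRange_succ (n := m + 1), List.filter_map, Function.comp_def]
    | succ i =>
      rw [List.finRange_succ (n := m + 1), List.filter_cons, List.filter_map, Function.comp_def]
      simp only [ne_eq, Fin.succ_inj]
      simp only [← ne_eq, List.filter_ne_finRange i]
      simp [List.finRange_succ (n := m), Function.comp_def, (Fin.succ_ne_zero i).symm]

theorem wedgeL_append (l₁ l₂ : List M) : wedgeL (l₁ ++ l₂) = wedgeL l₁ * wedgeL l₂ := by
  simp [wedgeL]

theorem wedgeL_map_finRange {k : ℕ} (v : Fin k → M) :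
    wedgeL ((List.finRange k).map v) = ιMulti ℝ k v := by
  simp [wedgeL, ιMulti_apply, List.ofFn_eq_map, Function.comp_def]

theorem zetaEl_succ (m : ℕ) : zetaEl (m + 1) =
    ∑ k : Fin (m + 1), ιMulti ℝ m (yb ∘ k.succAbove) * ιMulti ℝ m (yb' ∘ k.succAbove) := by
  simp only [zetaEl, List.filter_ne_finRange, List.map_map, wedgeL_append, wedgeL_map_finRange]

section Generators

variable {n : ℕ}

theorem aEnd_yb (x : Fin n) : aEnd n (yb x) = yb x := by
  ext k : 1
  by_cases h : k = x <;> simp [aEnd, yb, h]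

theorem aEnd_yb' (x : Fin n) : aEnd n (yb' x) = -yb' x := by
  ext k : 1
  by_cases h : k = x <;> simp [aEnd, yb', h]

theorem bEnd_yb (x : Fin n) : bEnd n (yb x) = -yb' x := by
  ext k : 1
  by_cases h : k = x <;> simp [bEnd, yb, yb', h]

theorem bEnd_yb' (x : Fin n) : bEnd n (yb' x) = 0 := by
  ext k : 1
  by_cases h : k = x <;> simp [bEnd, yb', h]

theorem cEnd_yb (x : Fin n) : cEnd n (yb x) = 0 := by
  ext k : 1
  by_cases h : k = x <;> simp [cEnd, yb, h]

theorem cEnd_yb' (x : Fin n) : cEnd n (yb' x) = yb x := by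
  ext k : 1
  by_cases h : k = x <;> simp [cEnd, yb, yb', h]

theorem actsAsRotation_rotEnd_single {W : Type*} [AddCommGroup W] [Module ℝ W] {i j : Fin n}
    (hij : i ≠ j) (w : W) : ActsAsRotation (rotEnd i j) (fun l => Pi.single l w) i j where
  apply_of_ne l hi hj := by simp [rotEnd, hi, hj]
  apply_left := by simp [rotEnd, hij]
  apply_right := by simp [rotEnd, hij.symm]

theorem derivExt_aEnd_zetaEl (m : ℕ) : derivExt (aEnd (m + 1)) (zetaEl (m + 1)) = 0 := by
  rw [zetaEl_succ, map_sum]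
  exact Finset.sum_eq_zero fun _ _ =>
    derivExt_ιMulti_mul_ιMulti_eq_zero_of_smul_of_neg_smul (c := 1)
      (fun t => by simp [aEnd_yb]) (fun t => by simp [aEnd_yb'])

theorem derivExt_bEnd_zetaEl (m : ℕ) : derivExt (bEnd (m + 1)) (zetaEl (m + 1)) = 0 := by
  rw [zetaEl_succ, map_sum]
  exact Finset.sum_eq_zero fun _ _ => derivExt_ιMulti_mul_ιMulti_eq_zero_of_left_to_right (c := -1)
    (fun t => by simp [bEnd_yb]) (fun t => by simp [bEnd_yb'])

theorem derivExt_cEnd_zetaEl (m : ℕ) : derivExt (cEnd (m + 1)) (zetaEl (m + 1)) = 0 := by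
  rw [zetaEl_succ, map_sum]
  exact Finset.sum_eq_zero fun _ _ => derivExt_ιMulti_mul_ιMulti_eq_zero_of_right_to_left (c := 1)
    (fun t => by simp [cEnd_yb]) (fun t => by simp [cEnd_yb'])

theorem derivExt_XEnd_zetaEl {m : ℕ} {i j : Fin (m + 1)} (hij : i ≠ j) :
    derivExt (XEnd i j) (zetaEl (m + 1)) = 0 := by
  rw [zetaEl_succ]
  exact (actsAsRotation_rotEnd_single hij ((1, 0) : ℝ × ℝ)).derivExt_sum_ιMulti_mul_ιMulti_eq_zero
    (actsAsRotation_rotEnd_single hij (0, 1)) hij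

end Generators

theorem zeta_invariant_general (n : ℕ) :
    ∀ f ∈ hbar n, derivExt f (zetaEl n) = 0 := by
  cases n with
  | zero => simp [zetaEl]
  | succ m =>
    have gens : hbarGens (m + 1) ⊆ LinearMap.ker ((derivExtₗ _).flip (zetaEl (m + 1))) := by
      rintro f ((rfl | rfl | rfl) | ⟨i, j, hij, rfl⟩)
      exacts [derivExt_aEnd_zetaEl m, derivExt_bEnd_zetaEl m, derivExt_cEnd_zetaEl m,
        derivExt_XEnd_zetaEl hij.ne]
    exact fun f hf => Submodule.span_le.2 gens hf

/-- For `n ≥ 2`, the element `ζ_n ∈ ⋀^{2n-2}(I_n)` is `h̄_n`-invariant. -/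
theorem zeta_invariant (n : ℕ) (hn : 2 ≤ n) :
    ∀ f ∈ hbar n, derivExt f (zetaEl n) = 0 :=
  zeta_invariant_general n
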